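/- Let h(m, n, r) = L_{m−1}^{(2ν)}(2aβr)·L_{n−1}^{(2ν)}(2aβr). Then m·h(m+1, n, r) + n·h(m, n+1, r) − r·(∂/∂r)h(m, n, r) + (4aβr − m − 4ν − n)·h(m, n, r) = 0 for all m, n ≥ 1 and all real r. -/

import Mathlib

/-
Put `x = 2aβr`. The operator `r ∂/∂r` acts as `x d/dx` on functions of `x`, so by the product
rule it suffices to know `x L_j'(x)` for each factor. The classical relation
`x L_j'(x) = (j + 1) L_{j+1}(x) - (j + 1 + α - x) L_j(x)`, with `α = 2ν`, cancels the shifted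
terms and leaves `h · [(m + 2ν - x) + (n + 2ν - x) + 4aβr - m - 4ν - n] = 0`.
That relation is checked coefficientwise, writing the coefficient of `x^k` in `L_j^{(α)}` as
`(-1)^k C(j + α, j - k) / k!`: it reduces to Pascal's rule and the absorption identity
`(d + 1) C(y, d + 1) = (y - d) C(y, d)` for generalized binomial coefficients.
-/

noncomputable def laguerreL (n : ℕ) (a x : ℝ) : ℝ :=
  ∑ k ∈ Finset.range (n + 1), (-1 : ℝ) ^ k *
    ((∏ i ∈ Finset.range (n - k), ((n : ℝ) + a - i)) / (Nat.factorial (n - k))) *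
    x ^ k / (Nat.factorial k)

open Finset

open Polynomial in
theorem Ring.choose_eq_prod_range_div {K : Type*} [Field K] [CharZero K] (y : K) (d : ℕ) :
    Ring.choose y d = (∏ i ∈ range d, (y - i)) / d.factorial := by
  rw [Ring.choose_eq_smul, ← aeval_eq_smeval, aeval_def, eval₂_eq_eval_map, descPochhammer_map,
    descPochhammer_eval_eq_prod_range, smul_eq_mul, inv_mul_eq_div]

theorem Ring.succ_mul_choose_succ {R : Type*} [CommRing R] [BinomialRing R] (y : R) (d : ℕ) :
    ((d : R) + 1) * Ring.choose y (d + 1) = (y - d) * Ring.choose y d := by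
  have h := Ring.choose_smul_choose y (n := d + 1) (Nat.le_succ d)
  rwa [Nat.choose_succ_self_right, Nat.add_sub_cancel_left, Ring.choose_one_right, nsmul_eq_mul,
    Nat.cast_succ, mul_comm (Ring.choose y d)] at h

-- Junk for `k > n`, where `n - k` truncates.
noncomputable def laguerreCoeff (n k : ℕ) (α : ℝ) : ℝ :=
  (-1) ^ k * Ring.choose ((n : ℝ) + α) (n - k) / k.factorial

theorem laguerreL_eq_sum_laguerreCoeff (n : ℕ) (α x : ℝ) :
    laguerreL n α x = ∑ k ∈ range (n + 1), laguerreCoeff n k α * x ^ k := by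
  refine sum_congr rfl fun k _ => ?_
  rw [laguerreCoeff, Ring.choose_eq_prod_range_div, mul_div_right_comm]

theorem laguerreL_eq_laguerreCoeff_zero_add (n : ℕ) (α x : ℝ) :
    laguerreL n α x =
      laguerreCoeff n 0 α + ∑ k ∈ range n, laguerreCoeff n (k + 1) α * x ^ (k + 1) := by
  rw [laguerreL_eq_sum_laguerreCoeff, sum_range_succ', pow_zero, mul_one, add_comm]

theorem hasDerivAt_laguerreL (n : ℕ) (α x : ℝ) :
    HasDerivAt (laguerreL n α)
      (∑ k ∈ range n, (k + 1) * laguerreCoeff n (k + 1) α * x ^ k) x := by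
  have hsum : HasDerivAt (fun y => ∑ k ∈ range n, laguerreCoeff n (k + 1) α * y ^ (k + 1))
      (∑ k ∈ range n, laguerreCoeff n (k + 1) α * ((k + 1 : ℕ) * x ^ (k + 1 - 1))) x :=
    HasDerivAt.fun_sum fun k _ => (hasDerivAt_pow (k + 1) x).const_mul _
  rw [funext (laguerreL_eq_laguerreCoeff_zero_add n α)]
  refine (hsum.const_add (laguerreCoeff n 0 α)).congr_deriv (sum_congr rfl fun k _ => ?_)
  rw [Nat.add_sub_cancel, Nat.cast_succ]
  ring

theorem laguerreCoeff_self (n : ℕ) (α : ℝ) :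
    laguerreCoeff n n α = (-1) ^ n / n.factorial := by
  simp [laguerreCoeff]

theorem laguerreCoeff_succ (n k : ℕ) (α : ℝ) :
    laguerreCoeff (n + 1) k α =
      (-1) ^ k * Ring.choose ((n : ℝ) + α + 1) (n + 1 - k) / k.factorial := by
  rw [laguerreCoeff, Nat.cast_succ, add_right_comm]

theorem succ_mul_laguerreCoeff_succ_zero (n : ℕ) (α : ℝ) :
    ((n : ℝ) + 1) * laguerreCoeff (n + 1) 0 α = ((n : ℝ) + 1 + α) * laguerreCoeff n 0 α := by
  have pascal := Ring.choose_succ_succ ((n : ℝ) + α) n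
  have absorb := Ring.succ_mul_choose_succ ((n : ℝ) + α) n
  rw [laguerreCoeff_succ, laguerreCoeff]
  simp only [pow_zero, Nat.sub_zero, Nat.factorial_zero, Nat.cast_one, div_one, one_mul]
  rw [pascal]
  linear_combination absorb

theorem succ_mul_laguerreCoeff_succ_succ {n k : ℕ} (hk : k < n) (α : ℝ) :
    ((n : ℝ) + 1) * laguerreCoeff (n + 1) (k + 1) α =
      ((k : ℝ) + 1 + ((n : ℝ) + 1 + α)) * laguerreCoeff n (k + 1) α -
        laguerreCoeff n k α := by
  obtain ⟨d, hd⟩ := Nat.exists_eq_add_of_lt hk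
  have pascal := Ring.choose_succ_succ ((n : ℝ) + α) d
  have absorb := Ring.succ_mul_choose_succ ((n : ℝ) + α) d
  have hn : (n : ℝ) = k + d + 1 := by exact_mod_cast hd
  rw [laguerreCoeff_succ, laguerreCoeff, laguerreCoeff, show n + 1 - (k + 1) = d + 1 by omega,
    show n - (k + 1) = d by omega, show n - k = d + 1 by omega, pascal, Nat.factorial_succ,
    pow_succ]
  push_cast
  field_simp
  rw [hn] at absorb ⊢
  linear_combination -absorb

theorem succ_mul_laguerreCoeff_succ_self (n : ℕ) (α : ℝ) :
    ((n : ℝ) + 1) * laguerreCoeff (n + 1) (n + 1) α = -laguerreCoeff n n α := by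
  rw [laguerreCoeff_self, laguerreCoeff_self, Nat.factorial_succ, pow_succ]
  push_cast
  field_simp

theorem mul_deriv_laguerreL (n : ℕ) (α x : ℝ) :
    x * deriv (laguerreL n α) x =
      (n + 1) * laguerreL (n + 1) α x - (n + 1 + α - x) * laguerreL n α x := by
  have hderiv : x * deriv (laguerreL n α) x =
      ∑ k ∈ range n, (k + 1) * laguerreCoeff n (k + 1) α * x ^ (k + 1) := by
    rw [(hasDerivAt_laguerreL n α x).deriv, mul_sum]
    exact sum_congr rfl fun k _ => by ring
  have hsucc : laguerreL (n + 1) α x = laguerreCoeff (n + 1) 0 α +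
      ∑ k ∈ range n, laguerreCoeff (n + 1) (k + 1) α * x ^ (k + 1) +
        laguerreCoeff (n + 1) (n + 1) α * x ^ (n + 1) := by
    rw [laguerreL_eq_laguerreCoeff_zero_add, sum_range_succ, add_assoc]
  have hxL : x * laguerreL n α x =
      ∑ k ∈ range n, laguerreCoeff n k α * x ^ (k + 1) +
        laguerreCoeff n n α * x ^ (n + 1) := by
    rw [laguerreL_eq_sum_laguerreCoeff, mul_sum, sum_range_succ]
    exact congrArg₂ _ (sum_congr rfl fun k _ => by ring) (by ring)
  have hcoeffs :
      ((n : ℝ) + 1) * ∑ k ∈ range n, laguerreCoeff (n + 1) (k + 1) α * x ^ (k + 1) =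
      ∑ k ∈ range n, (k + 1) * laguerreCoeff n (k + 1) α * x ^ (k + 1) +
        ((n : ℝ) + 1 + α) * ∑ k ∈ range n, laguerreCoeff n (k + 1) α * x ^ (k + 1) -
        ∑ k ∈ range n, laguerreCoeff n k α * x ^ (k + 1) := by
    rw [mul_sum, mul_sum, ← sum_add_distrib, ← sum_sub_distrib]
    refine sum_congr rfl fun k hk => ?_
    linear_combination x ^ (k + 1) * succ_mul_laguerreCoeff_succ_succ (mem_range.1 hk) α
  rw [hderiv, hsucc]
  linear_combination ((n : ℝ) + 1 + α) * laguerreL_eq_laguerreCoeff_zero_add n α x - hxL -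
    hcoeffs - succ_mul_laguerreCoeff_succ_zero n α -
    x ^ (n + 1) * succ_mul_laguerreCoeff_succ_self n α

theorem mul_deriv_comp_const_mul_mul {f g : ℝ → ℝ} {c r : ℝ}
    (hf : DifferentiableAt ℝ f (c * r)) (hg : DifferentiableAt ℝ g (c * r)) :
    r * deriv (fun s => f (c * s) * g (c * s)) r =
      c * r * deriv f (c * r) * g (c * r) + f (c * r) * (c * r * deriv g (c * r)) := by
  have hc : HasDerivAt (fun s => c * s) c r := by simpa using (hasDerivAt_id r).const_mul c
  have hfc : HasDerivAt (fun s => f (c * s)) (deriv f (c * r) * c) r := hf.hasDerivAt.comp r hc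
  have hgc : HasDerivAt (fun s => g (c * s)) (deriv g (c * r) * c) r := hg.hasDerivAt.comp r hc
  rw [(hfc.fun_mul hgc).deriv]
  ring

theorem laguerre_prod_mixed (a β ν : ℝ) (m n : ℕ) (hm : 1 ≤ m) (hn : 1 ≤ n) (r : ℝ) :
    (m : ℝ) * (laguerreL m (2 * ν) (2 * a * β * r) * laguerreL (n - 1) (2 * ν) (2 * a * β * r)) +
      (n : ℝ) * (laguerreL (m - 1) (2 * ν) (2 * a * β * r) * laguerreL n (2 * ν) (2 * a * β * r)) -
      r * deriv (fun s => laguerreL (m - 1) (2 * ν) (2 * a * β * s) *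
        laguerreL (n - 1) (2 * ν) (2 * a * β * s)) r +
      (4 * a * β * r - (m : ℝ) - 4 * ν - (n : ℝ)) *
        (laguerreL (m - 1) (2 * ν) (2 * a * β * r) * laguerreL (n - 1) (2 * ν) (2 * a * β * r)) = 0 := by
  obtain ⟨j, rfl⟩ : ∃ j, m = j + 1 := ⟨m - 1, by omega⟩
  obtain ⟨i, rfl⟩ : ∃ i, n = i + 1 := ⟨n - 1, by omega⟩
  rw [Nat.add_sub_cancel, Nat.add_sub_cancel,
    mul_deriv_comp_const_mul_mul (hasDerivAt_laguerreL j _ _).differentiableAt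
      (hasDerivAt_laguerreL i _ _).differentiableAt,
    mul_deriv_laguerreL, mul_deriv_laguerreL]
  push_cast
  ring
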